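/- arXiv:1112.0817 — 2 statements merged into one kernel-verified Lean document; each statement's English description precedes it below -/
import Mathlib

section
/- Let (X,τ) be a non-compact, locally compact Hausdorff topological space. Then τ = τ^GG, i.e. the de Groot dual of the de Groot dual of τ equals τ. -/
open Topology Set

/-- A set is saturated if it is the intersection of the open sets containing it. -/
def Saturated {X : Type*} (t : TopologicalSpace X) (A : Set X) : Prop :=
  A = ⋂₀ {U : Set X | t.IsOpen U ∧ A ⊆ U}

/-- The de Groot dual (co-compact) topology: generated by taking all compact
saturated subsets of `(X, t)` as a subbase for the closed sets. -/
def deGrootDual {X : Type*} (t : TopologicalSpace X) : TopologicalSpace X :=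
  TopologicalSpace.generateFrom
    {U : Set X | ∃ K : Set X, @IsCompact X t K ∧ Saturated t K ∧ U = Kᶜ}

/-!
In a Hausdorff space every set is saturated and compact sets are closed, so the de Groot dual
is the topology whose closed sets are `univ` and the compact sets. For a locally compact
Hausdorff space the sets compact in the dual are then exactly the closed sets:
a closed `C` covered by complements `Kᵢᶜ` is covered by one `K₀ᶜ` outside `K₀` and, inside, by
finitely many more since `K₀ ∩ C` is compact (Alexander's subbasis theorem reduces to such
covers); conversely, if `x ∉ C`, the complements of the compact neighbourhoods of `x` cover a
dual-compact `C`, and the intersection of finitely many of them is a neighbourhood of `x`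
missing `C`. So the open sets of the double dual are the complements of closed sets.
-/

open TopologicalSpace

local notation "IsCompact[" t "]" => @IsCompact _ t

section

variable {X : Type*} [t : TopologicalSpace X]

theorem saturated_of_t1Space [T1Space X] (A : Set X) : Saturated t A := by
  change A = ⋂₀ {U | IsOpen U ∧ A ⊆ U}
  rw [← nhdsKer_def, nhdsKer_eq_of_t1Space]

theorem isOpen_deGrootDual_compl [T1Space X] {K : Set X} (hK : IsCompact K) :
    IsOpen[deGrootDual t] Kᶜ :=
  GenerateOpen.basic _ ⟨K, hK, saturated_of_t1Space K, rfl⟩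

theorem t1Space_deGrootDual [T1Space X] : @T1Space X (deGrootDual t) :=
  @T1Space.mk X (deGrootDual t) fun _ ↦
    @IsClosed.mk X (deGrootDual t) _ (isOpen_deGrootDual_compl isCompact_singleton)

theorem isCompact_deGrootDual_of_isClosed [T2Space X] {C : Set X} (hC : IsClosed C) :
    IsCompact[deGrootDual t] C := by
  refine @isCompact_generateFrom X (deGrootDual t) _ rfl C fun P hPS hCP ↦ ?_
  have hPopen : ∀ U ∈ P, IsOpen U := fun U hU ↦ by
    obtain ⟨K, hK, -, rfl⟩ := hPS hU
    exact hK.isClosed.isOpen_compl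
  rcases C.eq_empty_or_nonempty with rfl | ⟨c, hc⟩
  · exact ⟨∅, empty_subset P, finite_empty, empty_subset _⟩
  obtain ⟨U₀, hU₀P, -⟩ := mem_sUnion.mp (hCP hc)
  obtain ⟨K₀, hK₀, -, rfl⟩ := hPS hU₀P
  obtain ⟨Q, hQP, hQ, hKQ⟩ := (hK₀.inter_right hC).elim_finite_subcover_image (c := id)
    hPopen (fun x hx ↦ by simpa using hCP hx.2)
  refine ⟨insert K₀ᶜ Q, insert_subset hU₀P hQP, hQ.insert _, fun x hx ↦ ?_⟩
  by_cases hxK : x ∈ K₀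
  · obtain ⟨U, hUQ, hxU⟩ := mem_iUnion₂.mp (hKQ ⟨hxK, hx⟩)
    exact mem_sUnion_of_mem hxU (mem_insert_of_mem _ hUQ)
  · exact mem_sUnion_of_mem hxK (mem_insert _ _)

theorem isClosed_of_isCompact_deGrootDual [T1Space X] [LocallyCompactSpace X] {C : Set X}
    (hC : IsCompact[deGrootDual t] C) : IsClosed C := by
  refine isOpen_compl_iff.mp (isOpen_iff_mem_nhds.mpr fun x hxC ↦ ?_)
  set N := {K : Set X | IsCompact K ∧ K ∈ 𝓝 x}
  have hcover : C ⊆ ⋃ K ∈ N, Kᶜ := fun y hy ↦ by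
    obtain ⟨K, hKx, hKy, hK⟩ :=
      local_compact_nhds (isOpen_compl_singleton.mem_nhds (ne_of_mem_of_not_mem hy hxC).symm)
    exact mem_biUnion (x := K) ⟨hK, hKx⟩ fun hyK ↦ hKy hyK rfl
  obtain ⟨F, hFN, hF, hCF⟩ := @IsCompact.elim_finite_subcover_image X _ (deGrootDual t) _ _ _ hC
    (fun K hK ↦ isOpen_deGrootDual_compl hK.1) hcover
  have hFx : ⋂ K ∈ F, K ∈ 𝓝 x := (Filter.biInter_mem hF).mpr fun K hK ↦ (hFN hK).2
  refine Filter.mem_of_superset hFx fun z hzF hzC ↦ ?_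
  obtain ⟨K, hKF, hzK⟩ := mem_iUnion₂.mp (hCF hzC)
  exact hzK (mem_iInter₂.mp hzF K hKF)

end

theorem deGrootDual_deGrootDual_general {X : Type*} (t : TopologicalSpace X)
    (h2 : @T2Space X t) (hlc : @LocallyCompactSpace X t) :
    deGrootDual (deGrootDual t) = t := by
  have hdualT1 := t1Space_deGrootDual (t := t)
  refine le_antisymm (fun U hU ↦ ?_) (le_generateFrom ?_)
  · simpa using isOpen_deGrootDual_compl (t := deGrootDual t)
      (isCompact_deGrootDual_of_isClosed hU.isClosed_compl)
  · rintro _ ⟨K, hK, -, rfl⟩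
    exact (isClosed_of_isCompact_deGrootDual hK).isOpen_compl

/-- For a non-compact, locally compact Hausdorff space, the double de Groot dual
equals the original topology. -/
theorem deGrootDual_deGrootDual {X : Type*} (t : TopologicalSpace X)
    (h2 : @T2Space X t) (hlc : @LocallyCompactSpace X t) (hnc : ¬ @CompactSpace X t) :
    deGrootDual (deGrootDual t) = t :=
  deGrootDual_deGrootDual_general t h2 hlc
end

section
/- In Minkowski space, open diamonds D(p,q) = {x : p ≪ x ≪ q}, where v ≪ w means w − v is timelike (η(w−v,w−v) > 0) and future-oriented ((w−v)₀ > 0), form a base for the Euclidean topology on ℝ⁴. -/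
/-! The diamond between `x - r e₀` and `x + r e₀` contains `x`, and it lies in the sup-norm ball
of radius `r` around `x`: a future-directed timelike vector dominates each spatial coordinate
by its time coordinate, so every coordinate of a point of the diamond stays within `r` of `x`. -/

open Set

/-- Minkowski space: `ℝ⁴` with coordinates indexed by `Fin 4`. -/
abbrev Mink : Type := Fin 4 → ℝ

/-- The Minkowski quadratic form of signature `(1, -1, -1, -1)`. -/
def eta (v : Mink) : ℝ := v 0 ^ 2 - v 1 ^ 2 - v 2 ^ 2 - v 3 ^ 2

/-- The causal order: `p ≤ q` iff `q - p` is non-past-oriented and non-spacelike. -/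
def causalLe (p q : Mink) : Prop := 0 ≤ (q - p) 0 ∧ 0 ≤ eta (q - p)

/-- The causal future of a point. -/
def Jplus (p : Mink) : Set Mink := {x | causalLe p x}

/-- The causal past of a point. -/
def Jminus (q : Mink) : Set Mink := {x | causalLe x q}

/-- The closed diamond determined by two points. -/
def Diamond (p q : Mink) : Set Mink := Jplus p ∩ Jminus q

/-- The chronological relation: `v ≪ w` iff `w - v` is timelike and future-oriented. -/
def chronLt (v w : Mink) : Prop := 0 < (w - v) 0 ∧ 0 < eta (w - v)

/-- The open diamond determined by two points. -/
def openDiamond (p q : Mink) : Set Mink := {x | chronLt p x ∧ chronLt x q}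

lemma continuous_eta : Continuous eta := by
  unfold eta; fun_prop

lemma isOpen_setOf_chronLt : IsOpen {vw : Mink × Mink | chronLt vw.1 vw.2} := by
  unfold chronLt
  have hsub : Continuous fun vw : Mink × Mink => vw.2 - vw.1 := by fun_prop
  exact (isOpen_lt continuous_const ((continuous_apply 0).comp hsub)).inter
    (isOpen_lt continuous_const (continuous_eta.comp hsub))

lemma isOpen_openDiamond (p q : Mink) : IsOpen (openDiamond p q) :=
  (isOpen_setOf_chronLt.preimage (by fun_prop : Continuous fun x : Mink => (p, x))).inter
    (isOpen_setOf_chronLt.preimage (by fun_prop : Continuous fun x : Mink => (x, q)))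

lemma sq_apply_lt_of_eta_pos {v : Mink} (hv : 0 < eta v) {i : Fin 4} (hi : i ≠ 0) :
    v i ^ 2 < v 0 ^ 2 := by
  unfold eta at hv
  fin_cases i <;> simp at hi ⊢ <;> nlinarith [sq_nonneg (v 1), sq_nonneg (v 2), sq_nonneg (v 3)]

lemma abs_apply_lt_of_chronLt {v w : Mink} (h : chronLt v w) {i : Fin 4} (hi : i ≠ 0) :
    |(w - v) i| < (w - v) 0 :=
  abs_lt_of_sq_lt_sq (sq_apply_lt_of_eta_pos h.2 hi) h.1.le

lemma mem_openDiamond_center (x : Mink) {r : ℝ} (hr : 0 < r) :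
    x ∈ openDiamond (x - Pi.single 0 r) (x + Pi.single 0 r) := by
  simp [openDiamond, chronLt, eta, hr]

lemma openDiamond_subset_ball (x : Mink) (r : ℝ) :
    openDiamond (x - Pi.single 0 r) (x + Pi.single 0 r) ⊆ Metric.ball x r := by
  rintro y ⟨hpy, hyq⟩
  have hr : 0 < r := by
    have := add_pos hpy.1 hyq.1
    simp only [Pi.sub_apply, Pi.add_apply, Pi.single_eq_same] at this
    linarith
  rw [Metric.mem_ball, dist_pi_lt_iff hr]
  intro i
  rw [Real.dist_eq, abs_lt]
  by_cases hi : i = 0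
  · subst hi
    have h₁ := hpy.1
    have h₂ := hyq.1
    simp only [Pi.sub_apply, Pi.add_apply, Pi.single_eq_same] at h₁ h₂
    constructor <;> linarith
  · have h₁ := abs_lt.mp (abs_apply_lt_of_chronLt hpy hi)
    have h₂ := abs_lt.mp (abs_apply_lt_of_chronLt hyq hi)
    simp only [Pi.sub_apply, Pi.add_apply, Pi.single_eq_same, Pi.single_eq_of_ne hi] at h₁ h₂
    constructor <;> linarith

/-- Open diamonds form a base for the Euclidean topology on `ℝ⁴`. -/
theorem openDiamonds_isTopologicalBasis :
    TopologicalSpace.IsTopologicalBasis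
      {D : Set Mink | ∃ p q : Mink, D = openDiamond p q} := by
  refine TopologicalSpace.isTopologicalBasis_of_isOpen_of_nhds ?_ fun x U hxU hU => ?_
  · rintro D ⟨p, q, rfl⟩
    exact isOpen_openDiamond p q
  · obtain ⟨r, hr, hball⟩ := Metric.isOpen_iff.mp hU x hxU
    exact ⟨_, ⟨_, _, rfl⟩, mem_openDiamond_center x hr,
      (openDiamond_subset_ball x r).trans hball⟩
end
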